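/- Let L > 0, let (ρ*, u₁*, u₂*) ∈ C¹ on the closure of N⁺_{L,f} with ∂₁(ρ*u₁*) + ∂₂(ρ*u₂*) = 0 in N⁺_{L,f}, ρ*u₁* > 0, and ρ*u₂* = 0 on {x₂ = 1}, and let f ∈ C¹([0,L]), f : [0,L] → (−1,1), satisfy the mass-flux identity ∫₀¹ ρ*u₁*(0,t) dt = ∫_{f(x₁)}^1 ρ*u₁*(x₁,t) dt for all x₁ ∈ [0,L], together with f(0) = 0. Then f satisfies the free boundary ODE f'(x₁) = (u₂*/u₁*)(x₁, f(x₁)) for 0 < x₁ < L. -/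

import Mathlib

/- Common setting: 2-d steady compressible Euler flows in infinitely long nozzles,
   Hölder norms, Helmholtz decomposition nonlinearities. -/

noncomputable section

open Set MeasureTheory Filter

/-- Points of the plane. -/
abbrev V2 := ℝ × ℝ

/-- Euclidean dot product on `ℝ²`. -/
def dot (a b : V2) : ℝ := a.1 * b.1 + a.2 * b.2

/-- Euclidean norm on `ℝ²`. -/
def enorm2 (a : V2) : ℝ := Real.sqrt (dot a a)

/-- `r^⊥ = (r₂, -r₁)`. -/
def perp (r : V2) : V2 := (r.2, -r.1)

/-- Partial derivative `∂₁` (within a set `D`). -/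
def pd1W (D : Set V2) (f : V2 → ℝ) (x : V2) : ℝ := fderivWithin ℝ f D x ((1 : ℝ), (0 : ℝ))

/-- Partial derivative `∂₂` (within a set `D`). -/
def pd2W (D : Set V2) (f : V2 → ℝ) (x : V2) : ℝ := fderivWithin ℝ f D x ((0 : ℝ), (1 : ℝ))

/-- Second partial derivative `∂₁₁` (within a set `D`). -/
def pd11W (D : Set V2) (f : V2 → ℝ) (x : V2) : ℝ := pd1W D (pd1W D f) x

/-- Second partial derivative `∂₂₂` (within a set `D`). -/
def pd22W (D : Set V2) (f : V2 → ℝ) (x : V2) : ℝ := pd2W D (pd2W D f) x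

/-- Gradient `∇f` (within a set `D`). -/
def gradW (D : Set V2) (f : V2 → ℝ) (x : V2) : V2 := (pd1W D f x, pd2W D f x)

/-- Orthogonal gradient `∇^⊥ f = (∂₂ f, -∂₁ f)` (within a set `D`). -/
def pgradW (D : Set V2) (f : V2 → ℝ) (x : V2) : V2 := (pd2W D f x, -(pd1W D f x))

/-- Divergence of a planar vector field (derivatives within `D`). -/
def div2W (D : Set V2) (F : V2 → V2) (x : V2) : ℝ :=
  pd1W D (fun y => (F y).1) x + pd2W D (fun y => (F y).2) x

/-- Laplacian (within a set `D`). -/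
def lapW (D : Set V2) (f : V2 → ℝ) (x : V2) : ℝ := div2W D (gradW D f) x

/-- Hölder seminorm of order `k`, exponent `α`, over `D ⊆ ℝ²`. -/
def holderSemi (α : ℝ) (k : ℕ) (D : Set V2) (f : V2 → ℝ) : ℝ :=
  sSup {c | ∃ x ∈ D, ∃ y ∈ D, x ≠ y ∧
    c = ‖iteratedFDerivWithin ℝ k f (closure D) x - iteratedFDerivWithin ℝ k f (closure D) y‖
        / enorm2 (x - y) ^ α}

/-- `C^{k,α}` Hölder norm over `D ⊆ ℝ²`. -/
def hNorm (k : ℕ) (α : ℝ) (D : Set V2) (f : V2 → ℝ) : ℝ :=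
  (∑ i ∈ Finset.range (k + 1),
    sSup ((fun x => ‖iteratedFDerivWithin ℝ i f (closure D) x‖) '' D))
  + holderSemi α k D f

/-- Hölder seminorm of order `k`, exponent `α`, over `D ⊆ ℝ` (one-dimensional). -/
def holderSemi1 (α : ℝ) (k : ℕ) (D : Set ℝ) (f : ℝ → ℝ) : ℝ :=
  sSup {c | ∃ x ∈ D, ∃ y ∈ D, x ≠ y ∧
    c = |iteratedDerivWithin k f (closure D) x - iteratedDerivWithin k f (closure D) y|
        / |x - y| ^ α}

/-- `C^{k,α}` Hölder norm over `D ⊆ ℝ` (one-dimensional). -/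
def hNorm1 (k : ℕ) (α : ℝ) (D : Set ℝ) (f : ℝ → ℝ) : ℝ :=
  (∑ i ∈ Finset.range (k + 1),
    sSup ((fun x => |iteratedDerivWithin i f (closure D) x|) '' D))
  + holderSemi1 α k D f

/-- The infinite nozzle `N = {x₁ > 0, -1 < x₂ < 1}`. -/
def Noz : Set V2 := {x | 0 < x.1 ∧ -1 < x.2 ∧ x.2 < 1}

/-- `N ∩ {x₂ > g(x₁)}`. -/
def NozG (g : ℝ → ℝ) : Set V2 := {x | 0 < x.1 ∧ g x.1 < x.2 ∧ x.2 < 1}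

/-- Cut-off nozzle `N_L`. -/
def NozL (L : ℝ) : Set V2 := {x | 0 < x.1 ∧ x.1 < L ∧ -1 < x.2 ∧ x.2 < 1}

/-- `N_L ∩ {x₂ > f(x₁)}`. -/
def NozLF (L : ℝ) (f : ℝ → ℝ) : Set V2 := {x | 0 < x.1 ∧ x.1 < L ∧ f x.1 < x.2 ∧ x.2 < 1}

/-- Bernoulli invariant `B = |u|²/2 + γ p/((γ-1) ρ)`. -/
def Bern (γ : ℝ) (u : V2 → V2) (ρ p : V2 → ℝ) (x : V2) : ℝ :=
  dot (u x) (u x) / 2 + γ * p x / ((γ - 1) * ρ x)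

/-- The steady Euler system, pointwise (derivatives taken within `D`). -/
def EulerAt (γ : ℝ) (D : Set V2) (u : V2 → V2) (ρ p : V2 → ℝ) (x : V2) : Prop :=
  div2W D (fun y => ρ y • u y) x = 0 ∧
  div2W D (fun y => (ρ y * (u y).1) • u y + p y • ((1 : ℝ), (0 : ℝ))) x = 0 ∧
  div2W D (fun y => (ρ y * (u y).2) • u y + p y • ((0 : ℝ), (1 : ℝ))) x = 0 ∧
  div2W D (fun y => (ρ y * Bern γ u ρ p y) • u y) x = 0

/-- Unit tangent `τ = (1, d)/√(1+d²)` to a graph with slope `d`. -/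
def tauv (d : ℝ) : V2 := (Real.sqrt (1 + d ^ 2))⁻¹ • ((1 : ℝ), d)

/-- Unit normal `n = (-d, 1)/√(1+d²)` to a graph with slope `d`. -/
def normv (d : ℝ) : V2 := (Real.sqrt (1 + d ^ 2))⁻¹ • ((-d : ℝ), (1 : ℝ))

/-- Density function `H(ξ, q, r)` of the Helmholtz decomposition. -/
def Hfun (γ B ξ : ℝ) (q r : V2) : ℝ :=
  ((γ - 1) * (B - dot (q + perp r) (q + perp r) / 2) / (γ * ξ)) ^ (1 / (γ - 1))

/-- Momentum field `𝔽(ξ, q, r) = H(ξ,q,r)(q + r^⊥)`. -/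
def Ffun (γ B ξ : ℝ) (q r : V2) : V2 := Hfun γ B ξ q r • (q + perp r)

/-- Source term `G(ξ, η, q, r) = -η H^{γ-1}/((γ-1)(q₁+r₂))`. -/
def Gfun (γ B ξ η : ℝ) (q r : V2) : ℝ :=
  -(η * Hfun γ B ξ q r ^ (γ - 1)) / ((γ - 1) * (q.1 + r.2))

/-- `𝒜(f, S)` evaluated with entropy value `s` and slope `d` of the free boundary. -/
def Aval (γ B p₀ u₀ s d : ℝ) : ℝ :=
  Real.sqrt (2 * (B - γ * p₀ ^ (1 - 1 / γ) * s ^ (1 / γ) / (γ - 1)))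
    - u₀ / Real.sqrt (1 + d ^ 2)

/-- The Helmholtz-decomposed system, pointwise (derivatives within `D`). -/
def HelmAt (γ B : ℝ) (D : Set V2) (S φ ψ : V2 → ℝ) (x : V2) : Prop :=
  div2W D (fun y => Ffun γ B (S y) (gradW D φ y) (gradW D ψ y)) x = 0 ∧
  lapW D ψ x = Gfun γ B (S x) (pd2W D S x) (gradW D φ x) (gradW D ψ x) ∧
  Hfun γ B (S x) (gradW D φ x) (gradW D ψ x) *
    dot (gradW D φ x + pgradW D ψ x) (gradW D S x) = 0

/-- Assumptions on the boundary data `(S_en, v_en)`: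
`(S_en, v_en) ≡ (S₀⁻, 0)` on `Γ_en \ Γ_en⁺` and `v_en ≡ 0` on `Γ_en^ε`. -/
def DataOK (S0m ε : ℝ) (Sen ven : ℝ → ℝ) : Prop :=
  (∀ t : ℝ, -1 ≤ t → t < 0 → Sen t = S0m ∧ ven t = 0) ∧
  (∀ t ∈ Icc (0 : ℝ) 1, (t ≤ ε ∨ 1 - ε ≤ t) → ven t = 0)

/-- `σ = ‖S_en - S₀‖_{2,α,Γ_en⁺} + ‖v_en‖_{1,α,Γ_en⁺}`. -/
def sigmaOf (α S0p : ℝ) (Sen ven : ℝ → ℝ) : ℝ :=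
  hNorm1 2 α (Icc 0 1) (fun t => Sen t - S0p) + hNorm1 1 α (Icc 0 1) ven

end


/-
The flux `Φ(s) = ∫_{f s}^1 ρ*u₁*(s, t) dt` is constant on `[0, L]`, so `Φ'(x₁) = 0`.
Differentiating under the integral sign and using `∂₁(ρ*u₁*) = -∂₂(ρ*u₂*)` gives
`Φ'(x₁) = ρ*u₂*(x₁, f x₁) - ρ*u₂*(x₁, 1) - f'(x₁) ρ*u₁*(x₁, f x₁)`, and the slip condition
removes the middle term. The fields are only `C¹` up to the curved lower boundary, so one first
substitutes `t = f s + τ (1 - f s)`: the integrand becomes `C¹` on a closed rectangle in `(s, τ)`,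
and the term `f'(x₁) ρ*u₁*` comes out of an integration by parts in `τ`.
-/

open Set Filter Topology MeasureTheory
open scoped Interval

section PartialDerivatives

variable {R : Set V2} {g : V2 → ℝ} {x : V2}

lemma fderivWithin_apply_mk (u v : ℝ) :
    fderivWithin ℝ g R x (u, v) = u * pd1W R g x + v * pd2W R g x := by
  have huv : ((u, v) : V2) = u • ((1 : ℝ), (0 : ℝ)) + v • ((0 : ℝ), (1 : ℝ)) := by
    ext <;> simp
  rw [huv, map_add, map_smul, map_smul, smul_eq_mul, smul_eq_mul, pd1W, pd2W]

lemma hasDerivAt_pd1W (hR : R ∈ 𝓝 x) (hg : DifferentiableWithinAt ℝ g R x) :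
    HasDerivAt (fun s => g (s, x.2)) (pd1W R g x) x.1 :=
  (hg.hasFDerivWithinAt.hasFDerivAt hR).comp_hasDerivAt x.1
    ((hasDerivAt_id x.1).prodMk (hasDerivAt_const x.1 x.2))

lemma hasDerivAt_pd2W (hR : R ∈ 𝓝 x) (hg : DifferentiableWithinAt ℝ g R x) :
    HasDerivAt (fun t => g (x.1, t)) (pd2W R g x) x.2 :=
  (hg.hasFDerivWithinAt.hasFDerivAt hR).comp_hasDerivAt x.2
    ((hasDerivAt_const x.2 x.1).prodMk (hasDerivAt_id x.2))

lemma ContDiffOn.continuousOn_pd1W (hg : ContDiffOn ℝ 1 g R) (hR : UniqueDiffOn ℝ R) :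
    ContinuousOn (pd1W R g) R :=
  (hg.continuousOn_fderivWithin hR le_rfl).clm_apply continuousOn_const

lemma ContDiffOn.continuousOn_pd2W (hg : ContDiffOn ℝ 1 g R) (hR : UniqueDiffOn ℝ R) :
    ContinuousOn (pd2W R g) R :=
  (hg.continuousOn_fderivWithin hR le_rfl).clm_apply continuousOn_const

end PartialDerivatives

section Rectangle

variable {p : V2 → ℝ} {a δ α β : ℝ}

lemma self_mem_Icc_sub_add (hδ : 0 < δ) : a ∈ Icc (a - δ) (a + δ) :=
  ⟨by linarith, by linarith⟩

lemma ContinuousOn.comp_mk_left {S T : Set ℝ} {g : V2 → ℝ} (hg : ContinuousOn g (S ×ˢ T))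
    {s : ℝ} (hs : s ∈ S) : ContinuousOn (fun t => g (s, t)) T :=
  ContinuousOn.uncurry_left (f := fun s t => g (s, t)) s hs hg

lemma ContinuousOn.intervalIntegrable_comp_mk_left {S : Set ℝ} {g : V2 → ℝ}
    (hg : ContinuousOn g (S ×ˢ Icc α β)) (hαβ : α ≤ β) {s : ℝ} (hs : s ∈ S) :
    IntervalIntegrable (fun t => g (s, t)) volume α β :=
  ((hg.comp_mk_left hs).mono (uIcc_of_le hαβ).subset).intervalIntegrable

lemma uniqueDiffOn_rect (hδ : 0 < δ) (hαβ : α < β) :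
    UniqueDiffOn ℝ (Icc (a - δ) (a + δ) ×ˢ Icc α β) :=
  (uniqueDiffOn_Icc (by linarith)).prod (uniqueDiffOn_Icc hαβ)

lemma rect_mem_nhds (hδ : 0 < δ) {t : ℝ} (ht : t ∈ Ioo α β) :
    Icc (a - δ) (a + δ) ×ˢ Icc α β ∈ 𝓝 (a, t) :=
  prod_mem_nhds (Icc_mem_nhds (by linarith) (by linarith)) (Icc_mem_nhds ht.1 ht.2)

lemma hasDerivAt_integral_of_contDiffOn_rect (hδ : 0 < δ) (hαβ : α < β)
    (hp : ContDiffOn ℝ 1 p (Icc (a - δ) (a + δ) ×ˢ Icc α β)) :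
    HasDerivAt (fun s => ∫ t in α..β, p (s, t))
      (∫ t in α..β, pd1W (Icc (a - δ) (a + δ) ×ˢ Icc α β) p (a, t)) a := by
  set R := Icc (a - δ) (a + δ) ×ˢ Icc α β
  have hball : Metric.ball a δ = Ioo (a - δ) (a + δ) := Real.ball_eq_Ioo a δ
  have hΙ : Ι α β = Ioc α β := uIoc_of_le hαβ.le
  have hp' := hp.continuousOn_pd1W (uniqueDiffOn_rect hδ hαβ)
  obtain ⟨M, hM⟩ := (isCompact_Icc.prod isCompact_Icc).exists_bound_of_continuousOn hp'
  have hF_meas : ∀ᶠ s in 𝓝 a, AEStronglyMeasurable (fun t => p (s, t))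
      (volume.restrict (Ι α β)) := by
    filter_upwards [Ioo_mem_nhds (by linarith : a - δ < a) (by linarith : a < a + δ)] with s hs
    exact hΙ ▸ (hp.continuousOn.intervalIntegrable_comp_mk_left hαβ.le
      (Ioo_subset_Icc_self hs)).aestronglyMeasurable
  have hF'_meas : AEStronglyMeasurable (fun t => pd1W R p (a, t)) (volume.restrict (Ι α β)) :=
    hΙ ▸ (hp'.intervalIntegrable_comp_mk_left hαβ.le
      (self_mem_Icc_sub_add hδ)).aestronglyMeasurable
  have h_bound : ∀ᵐ t, t ∈ Ι α β → ∀ s ∈ Metric.ball a δ, ‖pd1W R p (s, t)‖ ≤ M := by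
    refine Eventually.of_forall fun t ht s hs => hM _ ⟨?_, ?_⟩
    · exact Ioo_subset_Icc_self (hball ▸ hs)
    · exact Ioc_subset_Icc_self (hΙ ▸ ht)
  have h_diff : ∀ᵐ t, t ∈ Ι α β → ∀ s ∈ Metric.ball a δ,
      HasDerivAt (fun s => p (s, t)) (pd1W R p (s, t)) s := by
    filter_upwards [volume.ae_ne β] with t htβ ht s hs
    rw [hΙ] at ht
    rw [hball] at hs
    have hst : R ∈ 𝓝 (s, t) :=
      prod_mem_nhds (Icc_mem_nhds hs.1 hs.2) (Icc_mem_nhds ht.1 (lt_of_le_of_ne ht.2 htβ))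
    exact hasDerivAt_pd1W hst ((hp _ (mem_of_mem_nhds hst)).differentiableWithinAt one_ne_zero)
  exact (intervalIntegral.hasDerivAt_integral_of_dominated_loc_of_deriv_le
    (Metric.ball_mem_nhds a hδ) hF_meas
    (hp.continuousOn.intervalIntegrable_comp_mk_left hαβ.le (self_mem_Icc_sub_add hδ))
    hF'_meas h_bound intervalIntegrable_const h_diff).2

lemma hasDerivAt_pd1W_rect (hδ : 0 < δ)
    (hp : ContDiffOn ℝ 1 p (Icc (a - δ) (a + δ) ×ˢ Icc α β)) {t : ℝ} (ht : t ∈ Ioo α β) :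
    HasDerivAt (fun s => p (s, t)) (pd1W (Icc (a - δ) (a + δ) ×ˢ Icc α β) p (a, t)) a :=
  hasDerivAt_pd1W (rect_mem_nhds hδ ht)
    ((hp _ (mem_of_mem_nhds (rect_mem_nhds hδ ht))).differentiableWithinAt one_ne_zero)

lemma hasDerivAt_pd2W_rect (hδ : 0 < δ)
    (hp : ContDiffOn ℝ 1 p (Icc (a - δ) (a + δ) ×ˢ Icc α β)) {t : ℝ} (ht : t ∈ Ioo α β) :
    HasDerivAt (fun t => p (a, t)) (pd2W (Icc (a - δ) (a + δ) ×ˢ Icc α β) p (a, t)) t :=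
  hasDerivAt_pd2W (rect_mem_nhds hδ ht)
    ((hp _ (mem_of_mem_nhds (rect_mem_nhds hδ ht))).differentiableWithinAt one_ne_zero)

lemma integral_pd2W_eq_sub (hδ : 0 < δ) (hαβ : α < β)
    (hp : ContDiffOn ℝ 1 p (Icc (a - δ) (a + δ) ×ˢ Icc α β)) :
    ∫ t in α..β, pd2W (Icc (a - δ) (a + δ) ×ˢ Icc α β) p (a, t) = p (a, β) - p (a, α) :=
  intervalIntegral.integral_eq_sub_of_hasDerivAt_of_le hαβ.le
    (hp.continuousOn.comp_mk_left (self_mem_Icc_sub_add hδ))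
    (fun _ ht => hasDerivAt_pd2W_rect hδ hp ht)
    ((hp.continuousOn_pd2W (uniqueDiffOn_rect hδ hαβ)).intervalIntegrable_comp_mk_left hαβ.le
      (self_mem_Icc_sub_add hδ))

lemma integral_sub_mul_pd2W (hδ : 0 < δ) (hαβ : α < β)
    (hp : ContDiffOn ℝ 1 p (Icc (a - δ) (a + δ) ×ˢ Icc α β)) :
    ∫ t in α..β, (β - t) * pd2W (Icc (a - δ) (a + δ) ×ˢ Icc α β) p (a, t)
      = (∫ t in α..β, p (a, t)) - (β - α) * p (a, α) := by
  have hIoo : Ioo (min α β) (max α β) = Ioo α β := by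
    rw [min_eq_left hαβ.le, max_eq_right hαβ.le]
  rw [intervalIntegral.integral_mul_deriv_eq_deriv_mul_of_hasDerivAt (u := fun t => β - t)
    (u' := fun _ => -1) (by fun_prop)
    ((hp.continuousOn.comp_mk_left (self_mem_Icc_sub_add hδ)).mono (uIcc_of_le hαβ.le).subset)
    (fun t _ => (hasDerivAt_id' t).const_sub β) (hIoo ▸ fun t ht => hasDerivAt_pd2W_rect hδ hp ht)
    intervalIntegrable_const
    ((hp.continuousOn_pd2W (uniqueDiffOn_rect hδ hαβ)).intervalIntegrable_comp_mk_left hαβ.le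
      (self_mem_Icc_sub_add hδ))]
  simp
  ring

end Rectangle

-- `graphShear f b` maps `{s} × [0, 1]` affinely onto the section `{s} × [f s, b]`.
def graphShear (f : ℝ → ℝ) (b : ℝ) (x : V2) : V2 := (x.1, (b - f x.1) * x.2 + f x.1)

section GraphShear

variable {f : ℝ → ℝ} {b : ℝ} {P : V2 → ℝ} {U : Set V2} {I : Set ℝ}

lemma integral_eq_mul_integral_comp_graphShear (s : ℝ) :
    ∫ t in f s..b, P (s, t) = (b - f s) * ∫ τ in 0..1, P (graphShear f b (s, τ)) := by
  simp only [graphShear]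
  rw [← smul_eq_mul, intervalIntegral.smul_integral_comp_mul_add (fun t => P (s, t))]
  simp

lemma contDiffOn_graphShear (hf : ContDiffOn ℝ 1 f I) :
    ContDiffOn ℝ 1 (graphShear f b) (Prod.fst ⁻¹' I) := by
  have hf1 : ContDiffOn ℝ 1 (fun x : V2 => f x.1) (Prod.fst ⁻¹' I) :=
    hf.comp contDiff_fst.contDiffOn fun _ hx => hx
  exact contDiff_fst.contDiffOn.prodMk
    (((contDiffOn_const.sub hf1).mul contDiff_snd.contDiffOn).add hf1)

lemma ContDiffOn.comp_graphShear {T : Set ℝ} (hP : ContDiffOn ℝ 1 P U)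
    (hf : ContDiffOn ℝ 1 f I) (hmaps : MapsTo (graphShear f b) (I ×ˢ T) U) :
    ContDiffOn ℝ 1 (P ∘ graphShear f b) (I ×ˢ T) :=
  hP.comp ((contDiffOn_graphShear hf).mono fun _ hx => hx.1) hmaps

lemma graphShear_snd_mem_Icc {s τ : ℝ} (hfb : f s ≤ b) (hτ : τ ∈ Icc 0 1) :
    (graphShear f b (s, τ)).2 ∈ Icc (f s) b := by
  simp only [graphShear, mem_Icc] at hτ ⊢
  constructor <;> nlinarith

lemma graphShear_snd_mem_Ioo {s τ : ℝ} (hfb : f s < b) (hτ : τ ∈ Ioo 0 1) :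
    (graphShear f b (s, τ)).2 ∈ Ioo (f s) b := by
  simp only [graphShear, mem_Ioo] at hτ ⊢
  constructor <;> nlinarith

lemma mapsTo_graphShear (hfb : ∀ s ∈ I, f s ≤ b)
    (hU : ∀ s ∈ I, ∀ t ∈ Icc (f s) b, (s, t) ∈ U) :
    MapsTo (graphShear f b) (I ×ˢ Icc 0 1) U :=
  fun x hx => hU x.1 hx.1 _ (graphShear_snd_mem_Icc (hfb x.1 hx.1) hx.2)

lemma hasDerivAt_comp_graphShear_fst {a τ f' : ℝ} (hfa : HasDerivAt f f' a) (hI : I ∈ 𝓝 a)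
    (hmaps : ∀ s ∈ I, graphShear f b (s, τ) ∈ U)
    (hP : DifferentiableWithinAt ℝ P U (graphShear f b (a, τ))) :
    HasDerivAt (fun s => P (graphShear f b (s, τ)))
      (pd1W U P (graphShear f b (a, τ)) + (1 - τ) * f' * pd2W U P (graphShear f b (a, τ))) a := by
  have hline : HasDerivAt (fun s => graphShear f b (s, τ)) ((1 : ℝ), (1 - τ) * f') a := by
    refine (hasDerivAt_id a).prodMk ?_
    exact (((hfa.const_sub b).mul_const τ).add hfa).congr_deriv (by ring)
  have := (hP.hasFDerivWithinAt.comp_hasDerivWithinAt a hline.hasDerivWithinAt hmaps).hasDerivAt hI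
  rwa [Function.comp_def, fderivWithin_apply_mk, one_mul] at this

lemma hasDerivAt_comp_graphShear_snd {a τ : ℝ} {J : Set ℝ} (hJ : J ∈ 𝓝 τ)
    (hmaps : ∀ σ ∈ J, graphShear f b (a, σ) ∈ U)
    (hP : DifferentiableWithinAt ℝ P U (graphShear f b (a, τ))) :
    HasDerivAt (fun τ => P (graphShear f b (a, τ)))
      ((b - f a) * pd2W U P (graphShear f b (a, τ))) τ := by
  have hline : HasDerivAt (fun τ => graphShear f b (a, τ)) ((0 : ℝ), b - f a) τ :=
    (hasDerivAt_const τ a).prodMk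
      (by simpa using ((hasDerivAt_id τ).const_mul (b - f a)).add_const (f a))
  have := (hP.hasFDerivWithinAt.comp_hasDerivWithinAt τ hline.hasDerivWithinAt hmaps).hasDerivAt hJ
  rwa [Function.comp_def, fderivWithin_apply_mk, zero_mul, zero_add] at this

end GraphShear

section Flux

variable {f : ℝ → ℝ} {a b δ : ℝ} {P Q : V2 → ℝ} {U : Set V2}

lemma mul_pd1W_comp_graphShear (hδ : 0 < δ) (hf : ContDiffOn ℝ 1 f (Icc (a - δ) (a + δ)))
    (hfab : f a < b) (hmaps : MapsTo (graphShear f b) (Icc (a - δ) (a + δ) ×ˢ Icc 0 1) U)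
    (hP : ContDiffOn ℝ 1 P U) (hQ : ContDiffOn ℝ 1 Q U)
    (hdiv : ∀ t ∈ Ioo (f a) b, pd1W U P (a, t) + pd2W U Q (a, t) = 0)
    {τ : ℝ} (hτ : τ ∈ Ioo 0 1) :
    (b - f a) * pd1W (Icc (a - δ) (a + δ) ×ˢ Icc 0 1) (P ∘ graphShear f b) (a, τ)
      = -pd2W (Icc (a - δ) (a + δ) ×ˢ Icc 0 1) (Q ∘ graphShear f b) (a, τ)
        + deriv f a
          * ((1 - τ) * pd2W (Icc (a - δ) (a + δ) ×ˢ Icc 0 1) (P ∘ graphShear f b) (a, τ)) := by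
  set y := graphShear f b (a, τ)
  have hIa : Icc (a - δ) (a + δ) ∈ 𝓝 a := Icc_mem_nhds (by linarith) (by linarith)
  have hfa : HasDerivAt f (deriv f a) a :=
    ((hf.differentiableOn one_ne_zero a (mem_of_mem_nhds hIa)).differentiableAt hIa).hasDerivAt
  have hrow : ∀ s ∈ Icc (a - δ) (a + δ), graphShear f b (s, τ) ∈ U :=
    fun s hs => hmaps ⟨hs, Ioo_subset_Icc_self hτ⟩
  have hcol : ∀ σ ∈ Icc (0 : ℝ) 1, graphShear f b (a, σ) ∈ U :=
    fun σ hσ => hmaps ⟨mem_of_mem_nhds hIa, hσ⟩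
  have hp := hP.comp_graphShear hf hmaps
  have hq := hQ.comp_graphShear hf hmaps
  have hPy := (hP y (hrow a (mem_of_mem_nhds hIa))).differentiableWithinAt one_ne_zero
  have hQy := (hQ y (hrow a (mem_of_mem_nhds hIa))).differentiableWithinAt one_ne_zero
  have hdivy : pd1W U P y + pd2W U Q y = 0 := hdiv y.2 (graphShear_snd_mem_Ioo hfab hτ)
  have hτ' : Icc (0 : ℝ) 1 ∈ 𝓝 τ := Icc_mem_nhds hτ.1 hτ.2
  rw [(hasDerivAt_pd1W_rect hδ hp hτ).unique (hasDerivAt_comp_graphShear_fst hfa hIa hrow hPy),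
    (hasDerivAt_pd2W_rect hδ hp hτ).unique (hasDerivAt_comp_graphShear_snd hτ' hcol hPy),
    (hasDerivAt_pd2W_rect hδ hq hτ).unique (hasDerivAt_comp_graphShear_snd hτ' hcol hQy)]
  linear_combination (b - f a) * hdivy

lemma mul_integral_pd1W_comp_graphShear (hδ : 0 < δ)
    (hf : ContDiffOn ℝ 1 f (Icc (a - δ) (a + δ))) (hfab : f a < b)
    (hmaps : MapsTo (graphShear f b) (Icc (a - δ) (a + δ) ×ˢ Icc 0 1) U)
    (hP : ContDiffOn ℝ 1 P U) (hQ : ContDiffOn ℝ 1 Q U)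
    (hdiv : ∀ t ∈ Ioo (f a) b, pd1W U P (a, t) + pd2W U Q (a, t) = 0) :
    (b - f a) * ∫ τ in 0..1, pd1W (Icc (a - δ) (a + δ) ×ˢ Icc 0 1) (P ∘ graphShear f b) (a, τ)
      = Q (a, f a) - Q (a, b) - deriv f a * P (a, f a)
        + deriv f a * ∫ τ in 0..1, P (graphShear f b (a, τ)) := by
  set R := Icc (a - δ) (a + δ) ×ˢ Icc (0 : ℝ) 1
  have hp := hP.comp_graphShear hf hmaps
  have hq := hQ.comp_graphShear hf hmaps
  have hR := uniqueDiffOn_rect (a := a) hδ zero_lt_one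
  have hq' : IntervalIntegrable (fun τ => -pd2W R (Q ∘ graphShear f b) (a, τ)) volume 0 1 :=
    ((hq.continuousOn_pd2W hR).intervalIntegrable_comp_mk_left zero_le_one
      (self_mem_Icc_sub_add hδ)).neg
  have hp' : IntervalIntegrable (fun τ => (1 - τ) * pd2W R (P ∘ graphShear f b) (a, τ))
      volume 0 1 :=
    ((continuousOn_const.sub continuousOn_snd).mul (hp.continuousOn_pd2W hR)
      ).intervalIntegrable_comp_mk_left (g := fun x => (1 - x.2) * pd2W R (P ∘ graphShear f b) x)
      zero_le_one (self_mem_Icc_sub_add hδ)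
  calc (b - f a) * ∫ τ in 0..1, pd1W R (P ∘ graphShear f b) (a, τ)
      = ∫ τ in 0..1, (b - f a) * pd1W R (P ∘ graphShear f b) (a, τ) :=
        (intervalIntegral.integral_const_mul _ _).symm
    _ = ∫ τ in 0..1, (-pd2W R (Q ∘ graphShear f b) (a, τ)
          + deriv f a * ((1 - τ) * pd2W R (P ∘ graphShear f b) (a, τ))) :=
        intervalIntegral.integral_congr_Ioo_of_le zero_le_one fun τ hτ =>
          mul_pd1W_comp_graphShear hδ hf hfab hmaps hP hQ hdiv hτ
    _ = -(∫ τ in 0..1, pd2W R (Q ∘ graphShear f b) (a, τ))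
          + deriv f a * ∫ τ in 0..1, (1 - τ) * pd2W R (P ∘ graphShear f b) (a, τ) := by
        rw [intervalIntegral.integral_add hq' (hp'.const_mul _), intervalIntegral.integral_neg,
          intervalIntegral.integral_const_mul]
    _ = _ := by
        rw [integral_pd2W_eq_sub hδ zero_lt_one hq, integral_sub_mul_pd2W hδ zero_lt_one hp]
        simp [graphShear]
        ring

theorem hasDerivAt_integral_above_graph {I : Set ℝ} (hI : I ∈ 𝓝 a)
    (hf : ContDiffOn ℝ 1 f I) (hfb : ∀ s ∈ I, f s < b)
    (hU : ∀ s ∈ I, ∀ t ∈ Icc (f s) b, (s, t) ∈ U)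
    (hP : ContDiffOn ℝ 1 P U) (hQ : ContDiffOn ℝ 1 Q U)
    (hdiv : ∀ t ∈ Ioo (f a) b, pd1W U P (a, t) + pd2W U Q (a, t) = 0) :
    HasDerivAt (fun s => ∫ t in f s..b, P (s, t))
      (Q (a, f a) - Q (a, b) - deriv f a * P (a, f a)) a := by
  obtain ⟨δ, hδ, hδI⟩ := Metric.nhds_basis_closedBall.mem_iff.1 hI
  rw [Real.closedBall_eq_Icc] at hδI
  have hfδ := hf.mono hδI
  have hmaps := mapsTo_graphShear (b := b) (U := U) (fun s hs => (hfb s (hδI hs)).le)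
    (fun s hs => hU s (hδI hs))
  have hfa : HasDerivAt f (deriv f a) a :=
    ((hf.differentiableOn one_ne_zero a (mem_of_mem_nhds hI)).differentiableAt hI).hasDerivAt
  have hΨ : HasDerivAt (fun s => ∫ τ in 0..1, P (graphShear f b (s, τ))) _ a :=
    hasDerivAt_integral_of_contDiffOn_rect hδ zero_lt_one (hP.comp_graphShear hfδ hmaps)
  have key :=
    mul_integral_pd1W_comp_graphShear hδ hfδ (hfb a (mem_of_mem_nhds hI)) hmaps hP hQ hdiv
  simp_rw [integral_eq_mul_integral_comp_graphShear]
  exact ((hfa.const_sub b).mul hΨ).congr_deriv (by linear_combination key)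

end Flux

lemma mem_closure_nozLF {L : ℝ} {f : ℝ → ℝ} {s t : ℝ} (hs : s ∈ Ioo 0 L) (hf1 : f s < 1)
    (ht : t ∈ Icc (f s) 1) : (s, t) ∈ closure (NozLF L f) := by
  have hsub : ({s} : Set ℝ) ×ˢ Ioo (f s) 1 ⊆ NozLF L f := by
    rintro ⟨_, y⟩ ⟨rfl, hy⟩
    exact ⟨hs.1, hs.2, hy⟩
  refine closure_mono hsub ?_
  rw [closure_prod_eq, closure_singleton, closure_Ioo hf1.ne]
  exact ⟨rfl, ht⟩

theorem mass_flux_identity_gives_free_boundary_ode_general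
    (L : ℝ) (f : ℝ → ℝ) (ρs u1s u2s : V2 → ℝ)
    (hfC1 : ContDiffOn ℝ 1 f (Set.Icc 0 L))
    (hfrange : ∀ x₁ ∈ Set.Icc (0 : ℝ) L, f x₁ ∈ Set.Ioo (-1 : ℝ) 1)
    (hC1 : ContDiffOn ℝ 1 (fun x => (ρs x, u1s x, u2s x)) (closure (NozLF L f)))
    (hcont : ∀ x ∈ NozLF L f,
      pd1W (closure (NozLF L f)) (fun y => ρs y * u1s y) x
        + pd2W (closure (NozLF L f)) (fun y => ρs y * u2s y) x = 0)
    (hpos : ∀ x ∈ closure (NozLF L f), 0 < ρs x * u1s x)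
    (hslip : ∀ x₁ ∈ Set.Icc (0 : ℝ) L, ρs (x₁, (1 : ℝ)) * u2s (x₁, (1 : ℝ)) = 0)
    (hflux : ∀ x₁ ∈ Set.Icc (0 : ℝ) L,
      (∫ t in (0 : ℝ)..1, ρs ((0 : ℝ), t) * u1s ((0 : ℝ), t))
        = ∫ t in (f x₁)..1, ρs (x₁, t) * u1s (x₁, t)) :
    ∀ x₁ ∈ Set.Ioo (0 : ℝ) L,
      deriv f x₁ = u2s (x₁, f x₁) / u1s (x₁, f x₁) := by
  intro a ha
  have hI : Ioo 0 L ∈ 𝓝 a := Ioo_mem_nhds ha.1 ha.2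
  have hf1 : ∀ s ∈ Ioo 0 L, f s < 1 := fun s hs => (hfrange s (Ioo_subset_Icc_self hs)).2
  have hρ : ContDiffOn ℝ 1 ρs (closure (NozLF L f)) := contDiff_fst.comp_contDiffOn hC1
  have hu : ContDiffOn ℝ 1 (fun x => (u1s x, u2s x)) (closure (NozLF L f)) :=
    contDiff_snd.comp_contDiffOn hC1
  have hu1 : ContDiffOn ℝ 1 u1s (closure (NozLF L f)) := contDiff_fst.comp_contDiffOn hu
  have hu2 : ContDiffOn ℝ 1 u2s (closure (NozLF L f)) := contDiff_snd.comp_contDiffOn hu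
  have hΦ := hasDerivAt_integral_above_graph hI (hfC1.mono Ioo_subset_Icc_self) hf1
    (fun s hs _ ht => mem_closure_nozLF hs (hf1 s hs) ht) (hρ.mul hu1) (hρ.mul hu2)
    (fun t ht => hcont (a, t) ⟨ha.1, ha.2, ht⟩)
  have hΦ_const : HasDerivAt (fun s => ∫ t in f s..1, ρs (s, t) * u1s (s, t)) 0 a :=
    (hasDerivAt_const a _).congr_of_eventuallyEq
      (eventually_of_mem hI fun s hs => (hflux s (Ioo_subset_Icc_self hs)).symm)
  have hode := hΦ.unique hΦ_const
  rw [hslip a (Ioo_subset_Icc_self ha)] at hode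
  have hm := hpos (a, f a) (mem_closure_nozLF ha (hf1 a ha) ⟨le_rfl, (hf1 a ha).le⟩)
  rw [eq_div_iff (right_ne_zero_of_mul hm.ne')]
  refine mul_left_cancel₀ (left_ne_zero_of_mul hm.ne') ?_
  linear_combination -hode

/-- **The mass-flux identity determines the free boundary ODE** (Step 1 of the proof of
Lemma 4.4 in Bae–Park): if `(ρ*, u₁*, u₂*)` is `C¹` up to the boundary of `N⁺_{L,f}`,
satisfies the continuity equation there, `ρ*u₁* > 0`, the slip condition `ρ*u₂* = 0` on
`{x₂ = 1}`, and if `f : [0,L] → (-1,1)` is `C¹`, `f(0) = 0`, and the horizontal mass flux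
through each section `{x₁} × (f(x₁), 1)` equals the flux through the entrance, then
`f'(x₁) = (u₂*/u₁*)(x₁, f(x₁))` for `0 < x₁ < L`. -/
theorem mass_flux_identity_gives_free_boundary_ode
    (L : ℝ) (hL : 0 < L) (f : ℝ → ℝ) (ρs u1s u2s : V2 → ℝ)
    (hfC1 : ContDiffOn ℝ 1 f (Set.Icc 0 L))
    (hfrange : ∀ x₁ ∈ Set.Icc (0 : ℝ) L, f x₁ ∈ Set.Ioo (-1 : ℝ) 1)
    (hf0 : f 0 = 0)
    (hC1 : ContDiffOn ℝ 1 (fun x => (ρs x, u1s x, u2s x)) (closure (NozLF L f)))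
    (hcont : ∀ x ∈ NozLF L f,
      pd1W (closure (NozLF L f)) (fun y => ρs y * u1s y) x
        + pd2W (closure (NozLF L f)) (fun y => ρs y * u2s y) x = 0)
    (hpos : ∀ x ∈ closure (NozLF L f), 0 < ρs x * u1s x)
    (hslip : ∀ x₁ ∈ Set.Icc (0 : ℝ) L, ρs (x₁, (1 : ℝ)) * u2s (x₁, (1 : ℝ)) = 0)
    (hflux : ∀ x₁ ∈ Set.Icc (0 : ℝ) L,
      (∫ t in (0 : ℝ)..1, ρs ((0 : ℝ), t) * u1s ((0 : ℝ), t))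
        = ∫ t in (f x₁)..1, ρs (x₁, t) * u1s (x₁, t)) :
    ∀ x₁ ∈ Set.Ioo (0 : ℝ) L,
      deriv f x₁ = u2s (x₁, f x₁) / u1s (x₁, f x₁) :=
  mass_flux_identity_gives_free_boundary_ode_general L f ρs u1s u2s hfC1 hfrange hC1 hcont hpos
    hslip hflux
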